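/- arXiv:1606.02879 — 2 statements merged into one kernel-verified Lean document; each statement's English description precedes it below -/
import Mathlib

section
/- For every nested word automaton with ε-transitions (ε-NWA) A there exists a deterministic nested word automaton A' with L(A) = L(A'), whose number of linear states is at most exponential in the number of linear states of A (via a subset/summary construction over pairs of states closed under ε-reachability). -/
inductive Tag (A : Type) : Type where
  | op : A → Tag A
  | cl : A → Tag A

def Tag.isOp {A : Type} : Tag A → Bool
  | .op _ => true
  | .cl _ => false

def Tag.isCl {A : Type} : Tag A → Bool
  | .op _ => false
  | .cl _ => true

/-- Well-nested words over `A`: smallest set containing `[]` and closed under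
`u, v` well-nested, `a ∈ A` implies `u ⟨a⟩ v ⟨/a⟩` well-nested. -/
inductive IsNW {A : Type} : List (Tag A) → Prop where
  | nil : IsNW []
  | node {u v : List (Tag A)} (a : A) : IsNW u → IsNW v →
      IsNW (u ++ Tag.op a :: (v ++ [Tag.cl a]))

structure NWA (Q P A : Type) where
  δo : Q → A → Q → P → Prop
  δc : Q → P → A → Q → Prop
  q0 : Q
  F : Set Q

inductive NWASteps {Q P A : Type} (M : NWA Q P A) :
    Q × List P → List (Tag A) → Q × List P → Prop where
  | nil (c) : NWASteps M c [] c
  | op {q q' : Q} {p : P} {s : List P} {w : List (Tag A)} {c} {a : A} :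
      M.δo q a q' p → NWASteps M (q', p :: s) w c →
      NWASteps M (q, s) (Tag.op a :: w) c
  | cl {q q' : Q} {p : P} {s : List P} {w : List (Tag A)} {c} {a : A} :
      M.δc q p a q' → NWASteps M (q', s) w c →
      NWASteps M (q, p :: s) (Tag.cl a :: w) c

/-- The language of well-nested words accepted by an NWA: a run from the
initial configuration with empty stack to an accepting state with empty stack. -/
def NWALang {Q P A : Type} (M : NWA Q P A) : Set (List (Tag A)) :=
  {w | IsNW w ∧ ∃ q ∈ M.F, NWASteps M (M.q0, []) w (q, [])}

structure ENWA (Q P A : Type) extends NWA Q P A where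
  eps : Q → Q → Prop

inductive ENWASteps {Q P A : Type} (M : ENWA Q P A) :
    Q × List P → List (Tag A) → Q × List P → Prop where
  | nil (c) : ENWASteps M c [] c
  | op {q q' : Q} {p : P} {s : List P} {w : List (Tag A)} {c} {a : A} :
      M.δo q a q' p → ENWASteps M (q', p :: s) w c →
      ENWASteps M (q, s) (Tag.op a :: w) c
  | cl {q q' : Q} {p : P} {s : List P} {w : List (Tag A)} {c} {a : A} :
      M.δc q p a q' → ENWASteps M (q', s) w c →
      ENWASteps M (q, p :: s) (Tag.cl a :: w) c
  | eps {q q' : Q} {s : List P} {w : List (Tag A)} {c} :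
      M.eps q q' → ENWASteps M (q', s) w c →
      ENWASteps M (q, s) w c

def ELang {Q P A : Type} (M : ENWA Q P A) : Set (List (Tag A)) :=
  {w | IsNW w ∧ ∃ q ∈ M.F, ENWASteps M (M.q0, []) w (q, [])}

/-- Determinism of an NWA: exactly one transition for each `(q, ⟨a⟩)` and each
`(q, p, ⟨/a⟩)`. -/
def DetNWA {Q P A : Type} (M : NWA Q P A) : Prop :=
  (∀ q a, ∃! x : Q × P, M.δo q a x.1 x.2) ∧ (∀ q p a, ∃! q', M.δc q p a q')

section Aux
variable {Q P A : Type} {M : ENWA Q P A}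

theorem esteps_append {c c' c'' : Q × List P} {u v : List (Tag A)}
    (h1 : ENWASteps M c u c') (h2 : ENWASteps M c' v c'') :
    ENWASteps M c (u ++ v) c'' := by
  induction h1 with
  | nil => exact h2
  | op hδ _ ih => exact ENWASteps.op hδ (ih h2)
  | cl hδ _ ih => exact ENWASteps.cl hδ (ih h2)
  | eps hε _ ih => exact ENWASteps.eps hε (ih h2)

theorem esteps_lift {c c' : Q × List P} {w : List (Tag A)}
    (h : ENWASteps M c w c') (t : List P) :
    ENWASteps M (c.1, c.2 ++ t) w (c'.1, c'.2 ++ t) := by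
  induction h with
  | nil => exact ENWASteps.nil _
  | op hδ _ ih => exact ENWASteps.op hδ ih
  | cl hδ _ ih => exact ENWASteps.cl hδ ih
  | eps hε _ ih => exact ENWASteps.eps hε ih

theorem esteps_op_inv {c c' : Q × List P} {ww : List (Tag A)}
    (h : ENWASteps M c ww c') :
    ∀ {a : A} {w : List (Tag A)}, ww = Tag.op a :: w →
      ∃ q1 q2 p, ENWASteps M (c.1, ([] : List P)) [] (q1, []) ∧
        M.δo q1 a q2 p ∧ ENWASteps M (q2, p :: c.2) w c' := by
  induction h with
  | nil => intro a w h; simp at h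
  | op hδ hrest ih =>
      intro a w heq
      obtain ⟨rfl, rfl⟩ : _ ∧ _ := by
        injection heq with h1 h2; injection h1 with h1; exact ⟨h1, h2⟩
      exact ⟨_, _, _, ENWASteps.nil _, hδ, hrest⟩
  | cl hδ hrest ih => intro a w heq; simp at heq
  | eps hε _ ih =>
      intro a w heq
      obtain ⟨q1, q2, p, h1, h2, h3⟩ := ih heq
      exact ⟨q1, q2, p, ENWASteps.eps hε h1, h2, h3⟩

theorem esteps_cl_inv {c c' : Q × List P} {ww : List (Tag A)}
    (h : ENWASteps M c ww c') :
    ∀ {a : A} {w : List (Tag A)} {q : Q} {p : P} {s : List P},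
      ww = Tag.cl a :: w → c = (q, p :: s) →
      ∃ q1 q2, ENWASteps M (q, ([] : List P)) [] (q1, []) ∧
        M.δc q1 p a q2 ∧ ENWASteps M (q2, s) w c' := by
  induction h with
  | nil => intro a w q p s h; simp at h
  | op hδ hrest ih => intro a w q p s heq; simp at heq
  | cl hδ hrest ih =>
      intro a w q p s heq hc
      injection heq with h1 h2
      injection h1 with h1
      subst h1 h2
      cases hc
      exact ⟨_, _, ENWASteps.nil _, hδ, hrest⟩
  | eps hε _ ih =>
      intro a w q p s heq hc
      cases hc
      obtain ⟨q1, q2, h1, h2, h3⟩ := ih heq rfl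
      exact ⟨q1, q2, ENWASteps.eps hε h1, h2, h3⟩

theorem esteps_split {u : List (Tag A)} (hu : IsNW u) :
    ∀ {q : Q} {s : List P} {v : List (Tag A)} {c},
      ENWASteps M (q, s) (u ++ v) c →
      ∃ q', ENWASteps M (q, ([] : List P)) u (q', []) ∧ ENWASteps M (q', s) v c := by
  induction hu with
  | nil => intro q s v c h; exact ⟨q, ENWASteps.nil _, h⟩
  | @node u' v' a hu hv ih1 ih2 =>
      intro q s v c h
      simp only [List.append_assoc, List.cons_append, List.singleton_append] at h
      obtain ⟨q1, hru, h⟩ := ih1 h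
      obtain ⟨q2, q3, p, he1, hδo, h⟩ := esteps_op_inv h rfl
      obtain ⟨q4, hrv, h⟩ := ih2 h
      obtain ⟨q5, q6, he2, hδc, h⟩ := esteps_cl_inv h rfl rfl
      refine ⟨q6, ?_, h⟩
      have l1 : ENWASteps M (q4, [p]) [] (q5, [p]) := by
        simpa using esteps_lift he2 [p]
      have l2 : ENWASteps M (q3, [p]) v' (q4, [p]) := by
        simpa using esteps_lift hrv [p]
      have l3 : ENWASteps M (q5, [p]) [Tag.cl a] (q6, ([] : List P)) :=
        ENWASteps.cl hδc (ENWASteps.nil _)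
      have rest : ENWASteps M (q2, ([] : List P)) (Tag.op a :: (v' ++ [Tag.cl a])) (q6, []) := by
        have := ENWASteps.op hδo (esteps_append l2 (esteps_append l1 l3))
        simpa using this
      have := esteps_append hru (esteps_append he1 rest)
      simpa using this

def Rrel (M : ENWA Q P A) (w : List (Tag A)) : Q × Q → Prop :=
  fun x => ENWASteps M (x.1, []) w (x.2, [])

def dcomp (S T : Q × Q → Prop) : Q × Q → Prop :=
  fun x => ∃ m, S (x.1, m) ∧ T (m, x.2)

theorem Rrel_append {u v : List (Tag A)} (hu : IsNW u) (x : Q × Q) :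
    Rrel M (u ++ v) x ↔ dcomp (Rrel M u) (Rrel M v) x := by
  constructor
  · intro h
    obtain ⟨q', h1, h2⟩ := esteps_split hu h
    exact ⟨q', h1, h2⟩
  · rintro ⟨m, h1, h2⟩
    exact esteps_append h1 h2

theorem dcomp_init : dcomp (Rrel M []) (Rrel M []) = Rrel M ([] : List (Tag A)) := by
  funext x
  apply propext
  rw [← Rrel_append IsNW.nil x]
  rfl

/-- The determinized automaton. -/
def detM (M : ENWA Q P A) : NWA ((Q × Q) → Prop) (((Q × Q) → Prop) × A) A where
  δo S a S' p := S' = Rrel M [] ∧ p = (S, a)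
  δc S p b S' := S' = fun x => ∃ q1 q2 q3 q4 pp, p.1 (x.1, q1) ∧ M.δo q1 p.2 q2 pp ∧
      S (q2, q3) ∧ M.δc q3 pp b q4 ∧ ENWASteps M (q4, []) [] (x.2, [])
  q0 := Rrel M []
  F := {S | ∃ q ∈ M.F, S (M.q0, q)}

theorem close_eq {u v : List (Tag A)} (hu : IsNW u) (hv : IsNW v) (a : A)
    (T : Q × Q → Prop) :
    (fun x => ∃ q1 q2 q3 q4 pp, (dcomp T (Rrel M u)) (x.1, q1) ∧ M.δo q1 a q2 pp ∧
      (dcomp (Rrel M []) (Rrel M v)) (q2, q3) ∧ M.δc q3 pp a q4 ∧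
      ENWASteps M (q4, []) [] (x.2, []))
    = dcomp T (Rrel M (u ++ Tag.op a :: (v ++ [Tag.cl a]))) := by
  funext x
  apply propext
  constructor
  · rintro ⟨q1, q2, q3, q4, pp, ⟨m, hT, hRu⟩, hδo, ⟨m2, he0, hRv⟩, hδc, hfin⟩
    refine ⟨m, hT, ?_⟩
    have l0 : ENWASteps M (q2, [pp]) [] (m2, [pp]) := by simpa using esteps_lift he0 [pp]
    have l1 : ENWASteps M (m2, [pp]) v (q3, [pp]) := by simpa using esteps_lift hRv [pp]
    have l2 : ENWASteps M (q3, [pp]) [Tag.cl a] (x.2, ([] : List P)) :=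
      ENWASteps.cl hδc hfin
    have rest : ENWASteps M (q1, ([] : List P)) (Tag.op a :: (v ++ [Tag.cl a])) (x.2, []) := by
      have := ENWASteps.op hδo (esteps_append l0 (esteps_append l1 l2))
      simpa using this
    exact esteps_append hRu rest
  · rintro ⟨m, hT, hrun⟩
    obtain ⟨q1', hru, hrun⟩ := esteps_split hu hrun
    obtain ⟨q1, q2, pp, he1, hδo, hrun⟩ := esteps_op_inv hrun rfl
    obtain ⟨q3', hrv, hrun⟩ := esteps_split hv hrun
    obtain ⟨q3, q4, he2, hδc, hfin⟩ := esteps_cl_inv hrun rfl rfl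
    refine ⟨q1, q2, q3, q4, pp, ⟨m, hT, ?_⟩, hδo, ⟨q2, ENWASteps.nil _, ?_⟩, hδc, hfin⟩
    · simpa [Rrel] using esteps_append hru he1
    · simpa [Rrel] using esteps_append hrv he2

theorem nsteps_append {Q' P' : Type} {N : NWA Q' P' A} {c c' c'' : Q' × List P'}
    {u v : List (Tag A)} (h1 : NWASteps N c u c') (h2 : NWASteps N c' v c'') :
    NWASteps N c (u ++ v) c'' := by
  induction h1 with
  | nil => exact h2
  | op hδ _ ih => exact NWASteps.op hδ (ih h2)
  | cl hδ _ ih => exact NWASteps.cl hδ (ih h2)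

theorem det_run {w : List (Tag A)} (hw : IsNW w) :
    ∀ (T : Q × Q → Prop) (s : List (((Q × Q) → Prop) × A)),
      NWASteps (detM M) (dcomp T (Rrel M []), s) w (dcomp T (Rrel M w), s) := by
  induction hw with
  | nil => intro T s; exact NWASteps.nil _
  | @node u' v' a hu hv ih1 ih2 =>
      intro T s
      have r1 := ih1 T s
      have r2 : NWASteps (detM M) (Rrel M [], (dcomp T (Rrel M u'), a) :: s) v'
          (dcomp (Rrel M []) (Rrel M v'), (dcomp T (Rrel M u'), a) :: s) := by
        have := ih2 (Rrel M []) ((dcomp T (Rrel M u'), a) :: s)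
        rwa [dcomp_init] at this
      have r3 : NWASteps (detM M) (dcomp (Rrel M []) (Rrel M v'),
            (dcomp T (Rrel M u'), a) :: s) [Tag.cl a]
          (dcomp T (Rrel M (u' ++ Tag.op a :: (v' ++ [Tag.cl a]))), s) := by
        refine NWASteps.cl ?_ (NWASteps.nil _)
        show _ = _
        exact (close_eq hu hv a T).symm
      have r4 : NWASteps (detM M) (dcomp T (Rrel M u'), s)
          (Tag.op a :: (v' ++ [Tag.cl a]))
          (dcomp T (Rrel M (u' ++ Tag.op a :: (v' ++ [Tag.cl a]))), s) := by
        have := NWASteps.op (M := detM M) ⟨rfl, rfl⟩ (nsteps_append r2 r3)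
        simpa using this
      exact nsteps_append r1 r4

theorem det_unique {c : ((Q × Q) → Prop) × List (((Q × Q) → Prop) × A)}
    {w : List (Tag A)} {c1 c2} (h1 : NWASteps (detM M) c w c1)
    (h2 : NWASteps (detM M) c w c2) : c1 = c2 := by
  induction h1 generalizing c2 with
  | nil => cases h2; rfl
  | op hδ _ ih =>
      cases h2 with
      | op hδ' hrest' =>
          obtain ⟨rfl, rfl⟩ := hδ
          obtain ⟨h1, h2⟩ := hδ'
          cases h1; cases h2
          exact ih hrest'
  | cl hδ _ ih =>
      cases h2 with
      | cl hδ' hrest' =>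
          obtain rfl : _ = _ := hδ
          obtain rfl : _ = _ := hδ'
          exact ih hrest'

end Aux

section Main
variable {Q P A : Type} {M : ENWA Q P A}

theorem det_lang : NWALang (detM M) = ELang M := by
  ext w
  constructor
  · rintro ⟨hnw, S, hSF, hrun⟩
    have run0 := det_run (M := M) hnw (Rrel M []) []
    rw [dcomp_init] at run0
    have heq : (S, ([] : List (((Q × Q) → Prop) × A))) = (dcomp (Rrel M []) (Rrel M w), []) :=
      det_unique hrun run0
    obtain ⟨hS, -⟩ := Prod.mk.inj heq
    subst hS
    obtain ⟨q, hq, m, h1, h2⟩ := hSF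
    exact ⟨hnw, q, hq, by simpa using esteps_append h1 h2⟩
  · rintro ⟨hnw, q, hq, hrun⟩
    refine ⟨hnw, dcomp (Rrel M []) (Rrel M w), ⟨q, hq, M.q0, ENWASteps.nil _, hrun⟩, ?_⟩
    have := det_run (M := M) hnw (Rrel M []) ([])
    rwa [dcomp_init] at this

theorem det_det : DetNWA (detM M) := by
  constructor
  · intro S a
    refine ⟨(Rrel M [], (S, a)), ⟨rfl, rfl⟩, ?_⟩
    rintro ⟨y1, y2⟩ ⟨rfl, rfl⟩
    rfl
  · intro S p b
    exact ⟨_, rfl, fun y h => h⟩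

end Main

/-- every ε-NWA has an equivalent deterministic NWA with at most
exponentially many linear states (summary construction over pairs of states). -/
theorem enwa_determinization {Q P A : Type} [Fintype Q] (M : ENWA Q P A) :
    ∃ (Q' P' : Type) (iQ : Fintype Q') (M' : NWA Q' P' A),
      DetNWA M' ∧ NWALang M' = ELang M ∧
      @Fintype.card Q' iQ ≤ 2 ^ (Fintype.card Q * Fintype.card Q) := by
  classical
  refine ⟨(Q × Q) → Prop, ((Q × Q) → Prop) × A, inferInstance, detM M,
    det_det, det_lang, ?_⟩
  rw [Fintype.card_fun, Fintype.card_prop, Fintype.card_prod]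
end

section
/- Languages of ε-NWAs are closed under intersection: for ε-NWAs A₁, A₂ over Σ, the product automaton with linear states Q₁ × Q₂, hierarchical states P₁ × P₂, synchronized reading transitions, and unsynchronized ε-transitions (each ε-transition of the product simulates an ε-transition of exactly one component while the other component's state is unchanged), decides L(A₁) ∩ L(A₂). -/
/-- The product of two ε-NWAs: reading transitions are synchronized, while
each ε-transition simulates an ε-transition of exactly one component. -/
def prodENWA {Q₁ P₁ Q₂ P₂ A : Type} (M₁ : ENWA Q₁ P₁ A) (M₂ : ENWA Q₂ P₂ A) :
    ENWA (Q₁ × Q₂) (P₁ × P₂) A where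
  δo := fun q a q' p => M₁.δo q.1 a q'.1 p.1 ∧ M₂.δo q.2 a q'.2 p.2
  δc := fun q p a q' => M₁.δc q.1 p.1 a q'.1 ∧ M₂.δc q.2 p.2 a q'.2
  q0 := (M₁.q0, M₂.q0)
  F := {q | q.1 ∈ M₁.F ∧ q.2 ∈ M₂.F}
  eps := fun q q' => (M₁.eps q.1 q'.1 ∧ q.2 = q'.2) ∨ (q.1 = q'.1 ∧ M₂.eps q.2 q'.2)

section Helpers
variable {Q₁ P₁ Q₂ P₂ A : Type} {M₁ : ENWA Q₁ P₁ A} {M₂ : ENWA Q₂ P₂ A}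

lemma enwa_proj1 {c c' : (Q₁ × Q₂) × List (P₁ × P₂)} {w : List (Tag A)}
    (h : ENWASteps (prodENWA M₁ M₂) c w c') :
    ENWASteps M₁ (c.1.1, c.2.map Prod.fst) w (c'.1.1, c'.2.map Prod.fst) := by
  induction h with
  | nil => exact .nil _
  | op h _ ih => exact .op h.1 ih
  | cl h _ ih => exact .cl h.1 ih
  | eps h _ ih =>
    rcases h with ⟨h, _⟩ | ⟨he, _⟩
    · exact .eps h ih
    · exact he ▸ ih

lemma enwa_proj2 {c c' : (Q₁ × Q₂) × List (P₁ × P₂)} {w : List (Tag A)}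
    (h : ENWASteps (prodENWA M₁ M₂) c w c') :
    ENWASteps M₂ (c.1.2, c.2.map Prod.snd) w (c'.1.2, c'.2.map Prod.snd) := by
  induction h with
  | nil => exact .nil _
  | op h _ ih => exact .op h.2 ih
  | cl h _ ih => exact .cl h.2 ih
  | eps h _ ih =>
    rcases h with ⟨_, he⟩ | ⟨_, h⟩
    · exact he ▸ ih
    · exact .eps h ih

lemma enwa_liftR {c c' : Q₂ × List P₂} {w : List (Tag A)}
    (h : ENWASteps M₂ c w c') (hw : w = []) :
    ∀ (q₁ : Q₁) (s₁ : List P₁) (w' : List (Tag A)) (d),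
      ENWASteps (prodENWA M₁ M₂) ((q₁, c'.1), s₁.zip c'.2) w' d →
      ENWASteps (prodENWA M₁ M₂) ((q₁, c.1), s₁.zip c.2) w' d := by
  induction h with
  | nil => exact fun _ _ _ _ h => h
  | op _ _ _ => simp at hw
  | cl _ _ _ => simp at hw
  | @eps q q' s w c h _ ih =>
    exact fun q₁ s₁ w' d hd =>
      .eps (q' := (q₁, q')) (Or.inr ⟨rfl, h⟩) (ih hw q₁ s₁ w' d hd)

lemma enwa_peel_op {c c' : Q₂ × List P₂} {w : List (Tag A)}
    (h : ENWASteps M₂ c w c') {a : A} {w' : List (Tag A)}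
    (hw : w = Tag.op a :: w') :
    ∃ q₁ q₂ p, ENWASteps M₂ c [] (q₁, c.2) ∧ M₂.δo q₁ a q₂ p ∧
      ENWASteps M₂ (q₂, p :: c.2) w' c' := by
  induction h with
  | nil => simp at hw
  | @op q q' p s w c a' h rest ih =>
    obtain ⟨rfl, rfl⟩ : a' = a ∧ w = w' := by
      constructor <;> [exact (Tag.op.injEq _ _ ▸ (List.cons.injEq _ _ _ _ ▸ hw).1 : _); exact (List.cons.injEq _ _ _ _ ▸ hw).2]
    exact ⟨q, q', p, .nil _, h, rest⟩
  | cl _ _ _ => simp at hw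
  | @eps q q' s w c h rest ih =>
    obtain ⟨q₁, q₂, p, pre, d, r⟩ := ih hw
    exact ⟨q₁, q₂, p, .eps h pre, d, r⟩

lemma enwa_peel_cl {c c' : Q₂ × List P₂} {w : List (Tag A)}
    (h : ENWASteps M₂ c w c') {a : A} {w' : List (Tag A)}
    (hw : w = Tag.cl a :: w') :
    ∃ q₁ q₂ p s, c.2 = p :: s ∧ ENWASteps M₂ c [] (q₁, c.2) ∧
      M₂.δc q₁ p a q₂ ∧ ENWASteps M₂ (q₂, s) w' c' := by
  induction h with
  | nil => simp at hw
  | op _ _ _ => simp at hw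
  | @cl q q' p s w c a' h rest ih =>
    obtain ⟨rfl, rfl⟩ : a' = a ∧ w = w' := by
      constructor <;> [exact (Tag.cl.injEq _ _ ▸ (List.cons.injEq _ _ _ _ ▸ hw).1 : _); exact (List.cons.injEq _ _ _ _ ▸ hw).2]
    exact ⟨q, q', p, s, rfl, .nil _, h, rest⟩
  | @eps q q' s w c h rest ih =>
    obtain ⟨q₁, q₂, p, t, hs, pre, d, r⟩ := ih hw
    exact ⟨q₁, q₂, p, t, hs, .eps h pre, d, r⟩

lemma enwa_combine {c c' : Q₁ × List P₁} {w : List (Tag A)}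
    (h₁ : ENWASteps M₁ c w c') :
    ∀ {d d' : Q₂ × List P₂}, ENWASteps M₂ d w d' →
      ENWASteps (prodENWA M₁ M₂) ((c.1, d.1), c.2.zip d.2) w
        ((c'.1, d'.1), c'.2.zip d'.2) := by
  induction h₁ with
  | nil c =>
    intro d d' h₂
    exact enwa_liftR h₂ rfl c.1 c.2 [] _ (.nil _)
  | @op q q' p s w c a h rest ih =>
    rintro ⟨q₂, s₂⟩ d' h₂
    obtain ⟨m, n, p₂, pre, dd, r⟩ := enwa_peel_op h₂ rfl
    exact enwa_liftR pre rfl q s _ _ (.op ⟨h, dd⟩ (ih r))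
  | @cl q q' p s w c a h rest ih =>
    rintro ⟨q₂, s₂⟩ d' h₂
    obtain ⟨m, n, p₂, t, hs, pre, dd, r⟩ := enwa_peel_cl h₂ rfl
    dsimp at hs; subst hs
    exact enwa_liftR pre rfl q (p :: s) _ _ (.cl ⟨h, dd⟩ (ih r))
  | @eps q q' s w c h rest ih =>
    rintro ⟨q₂, s₂⟩ d' h₂
    exact .eps (q' := (q', q₂)) (Or.inl ⟨h, rfl⟩) (ih h₂)

end Helpers

/-- the product ε-NWA decides the intersection of the languages. -/
theorem enwa_product_inter {Q₁ P₁ Q₂ P₂ A : Type}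
    (M₁ : ENWA Q₁ P₁ A) (M₂ : ENWA Q₂ P₂ A) :
    ELang (prodENWA M₁ M₂) = ELang M₁ ∩ ELang M₂ := by
  ext w
  constructor
  · rintro ⟨hnw, ⟨f₁, f₂⟩, ⟨hf₁, hf₂⟩, run⟩
    exact ⟨⟨hnw, f₁, hf₁, enwa_proj1 run⟩, ⟨hnw, f₂, hf₂, enwa_proj2 run⟩⟩
  · rintro ⟨⟨hnw, f₁, hf₁, run₁⟩, ⟨_, f₂, hf₂, run₂⟩⟩
    exact ⟨hnw, (f₁, f₂), ⟨hf₁, hf₂⟩, enwa_combine run₁ run₂⟩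
end
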